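/- arXiv:1109.5740 — 3 statements merged into one kernel-verified Lean document; each statement's English description precedes it below -/
import Mathlib

section
/- Let g_0, …, g_{m-1} be holomorphic functions on the upper half-plane such that the matrix of the translation action τ ↦ τ+1 on their span (in the ordered basis g_0, …, g_{m-1}) is the modified Jordan block J_{m,λ} with λ = e^{2πiμ}. Then there exist holomorphic functions h_0, …, h_{m-1} on the upper half-plane with h_t(τ+1) = λ h_t(τ) (hence each h_t has a convergent Fourier expansion ∑_{n∈ℤ} a_t(n) q^{n+μ}, q = e^{2πiτ}), such that g_j(τ) = ∑_{t=0}^{j} C(τ, t) h_{j-t}(τ) for 0 ≤ j ≤ m-1. -/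
/-!
Put `G_τ = ∑ g_j(τ) X^j` and `H_τ = (1 + X)^{-τ} G_τ`, with `(1 + X)^r = ∑ C(r, t) X^t`, and let
`h_t(τ)` be the coefficients of `H_τ`. Then `G_τ = (1 + X)^τ H_τ` is the claimed expansion of the
`g_j`. The hypothesis says `G_{τ+1} ≡ λ (1 + X) G_τ` modulo `X^m`, so modulo `X^m`
`H_{τ+1} ≡ (1 + X)^{-τ-1} λ (1 + X) G_τ = λ H_τ`.
-/

open Complex

noncomputable def cbinom (x : ℂ) (t : ℕ) : ℂ :=
  (∏ i ∈ Finset.range t, (x - i)) / (Nat.factorial t)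

open Finset PowerSeries

namespace PowerSeries

variable {R : Type*} [CommRing R]

theorem coeff_one_add_X_mul (f : R⟦X⟧) (n : ℕ) :
    coeff n ((1 + X) * f) = coeff n f + if n = 0 then 0 else coeff (n - 1) f := by
  cases n <;> simp [add_mul, coeff_succ_X_mul]

variable [BinomialRing R]

theorem binomialSeries_add_one (r : R) :
    binomialSeries R (r + 1) = binomialSeries R r * (1 + X) := by
  rw [binomialSeries_add, ← Nat.cast_one, binomialSeries_nat, pow_one]

theorem binomialSeries_mul_binomialSeries_neg (r : R) :
    binomialSeries R r * binomialSeries R (-r) = 1 := by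
  rw [← binomialSeries_add, add_neg_cancel, binomialSeries_zero]

theorem coeff_binomialSeries_mul (r : R) (f : R⟦X⟧) (n : ℕ) :
    coeff n (binomialSeries R r * f) =
      ∑ t ∈ range (n + 1), Ring.choose r t * coeff (n - t) f := by
  simp [coeff_mul, Nat.sum_antidiagonal_eq_sum_range_succ_mk]

end PowerSeries

theorem cbinom_eq_choose (x : ℂ) (t : ℕ) : cbinom x t = Ring.choose x t := by
  rw [Ring.choose_eq_smul, ← Polynomial.aeval_eq_smeval, Polynomial.aeval_def,
    ← Polynomial.eval_map, descPochhammer_map, descPochhammer_eval_eq_prod_range, cbinom,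
    smul_eq_mul, div_eq_inv_mul]

theorem differentiable_cbinom (t : ℕ) : Differentiable ℂ (cbinom · t) :=
  (Differentiable.fun_finsetProd fun _ _ => differentiable_id.sub_const _).div_const _

section JordanBlock

variable (g : ℕ → ℂ → ℂ)

noncomputable def genSeries (τ : ℂ) : ℂ⟦X⟧ := mk fun j => g j τ

-- The paper's `h_t`.
noncomputable def periodicPart (t : ℕ) (τ : ℂ) : ℂ :=
  ∑ s ∈ range (t + 1), cbinom (-τ) s * g (t - s) τ

theorem periodicPart_eq_coeff (t : ℕ) (τ : ℂ) :
    periodicPart g t τ = coeff t (PowerSeries.binomialSeries ℂ (-τ) * genSeries g τ) := by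
  simp [periodicPart, genSeries, coeff_binomialSeries_mul, cbinom_eq_choose]

theorem differentiableOn_periodicPart {s : Set ℂ} {t : ℕ} (hg : ∀ j ≤ t, DifferentiableOn ℂ (g j) s) :
    DifferentiableOn ℂ (periodicPart g t) s :=
  DifferentiableOn.fun_sum fun i _ =>
    ((differentiable_cbinom i).comp differentiable_neg).differentiableOn.mul
      (hg _ (Nat.sub_le t i))

theorem sum_cbinom_mul_periodicPart (j : ℕ) (τ : ℂ) :
    ∑ t ∈ range (j + 1), cbinom τ t * periodicPart g (j - t) τ = g j τ := by
  simp only [cbinom_eq_choose, periodicPart_eq_coeff]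
  rw [← coeff_binomialSeries_mul, ← mul_assoc, binomialSeries_mul_binomialSeries_neg, one_mul,
    genSeries, coeff_mk]

theorem periodicPart_add_one {lam τ : ℂ} {t : ℕ}
    (hg : ∀ j ≤ t, g j (τ + 1) = lam * (g j τ + if j = 0 then 0 else g (j - 1) τ)) :
    periodicPart g t (τ + 1) = lam * periodicPart g t τ := by
  have hshift : ∀ s ∈ range (t + 1),
      cbinom (-(τ + 1)) s * g (t - s) (τ + 1) =
        lam * (Ring.choose (-(τ + 1)) s * coeff (t - s) ((1 + X) * genSeries g τ)) := by
    intro s _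
    rw [hg _ (Nat.sub_le t s), coeff_one_add_X_mul, cbinom_eq_choose]
    simp only [genSeries, coeff_mk]
    split_ifs <;> ring
  rw [periodicPart, sum_congr rfl hshift, ← mul_sum, ← coeff_binomialSeries_mul, ← mul_assoc,
    ← binomialSeries_add_one, show -(τ + 1) + 1 = -τ by ring,
    periodicPart_eq_coeff]

end JordanBlock

/-- If `g_0,…,g_{m-1}` are holomorphic on the upper half-plane and translation
`τ ↦ τ+1` acts on their span by the modified Jordan block `J_{m,λ}`, i.e.
`g_j(τ+1) = λ(g_j(τ) + g_{j-1}(τ))` with `g_{-1} = 0` and `λ = e^{2πiμ}`, then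
there are holomorphic `h_0,…,h_{m-1}` with `h_t(τ+1) = λ h_t(τ)` such that
`g_j(τ) = ∑_{t=0}^{j} C(τ,t) h_{j-t}(τ)`. -/
theorem polynomial_q_expansion (m : ℕ) (μ : ℂ) (g : ℕ → ℂ → ℂ)
    (hol : ∀ j < m, DifferentiableOn ℂ (g j) {τ : ℂ | 0 < τ.im})
    (hrec : ∀ j < m, ∀ τ : ℂ, 0 < τ.im →
      g j (τ + 1) = Complex.exp (2 * Real.pi * I * μ) *
        (g j τ + if j = 0 then 0 else g (j - 1) τ)) :
    ∃ h : ℕ → ℂ → ℂ,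
      (∀ t < m, DifferentiableOn ℂ (h t) {τ : ℂ | 0 < τ.im}) ∧
      (∀ t < m, ∀ τ : ℂ, 0 < τ.im →
        h t (τ + 1) = Complex.exp (2 * Real.pi * I * μ) * h t τ) ∧
      (∀ j < m, ∀ τ : ℂ, 0 < τ.im →
        g j τ = ∑ t ∈ Finset.range (j + 1), cbinom τ t * h (j - t) τ) :=
  ⟨periodicPart g,
    fun t ht => differentiableOn_periodicPart g fun j hj => hol j (by omega),
    fun t ht τ hτ => periodicPart_add_one g fun j hj => hrec j (by omega) τ hτ,
    fun j _ τ _ => (sum_cbinom_mul_periodicPart g j τ).symm⟩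
end

section
/- Let γ = [[a,b],[c,d]] ∈ SL(2,ℤ) with c > 0 have Eichler canonical representation with l_{ν+1} ≠ 0 and l_0 = 0. Then |l_1 l_2 ⋯ l_{ν+1}| ≤ |d - c|. -/
/-!
With `l_0 = 0` we have `γ = W S` for `W = (S T^{l_{ν+1}}) ⋯ (S T^{l_1})`, and `d - c = -q` where
`(p, q) = W (1, 1)ᵀ`. Left multiplication by `S T^k` sends `(p, q)` to `(-q, p + k q)`. Since the
`l_j` alternate in sign, `(-1)^n p q > 0` is preserved along the product, so `p` and `k q` always
have the same sign and `|p + k q| ≥ |k| |q|`; inductively `|q| ≥ |l_1 ⋯ l_{ν+1}|`.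
-/

open ModularGroup

/-- The product `(S T^{l_{ν+1}}) ⋯ (S T^{l_1}) (S T^{l_0})` where
`L = [l_0, l_1, …, l_{ν+1}]`. -/
def eichlerWord (L : List ℤ) : Matrix.SpecialLinearGroup (Fin 2) ℤ :=
  ((L.map fun l => ModularGroup.S * ModularGroup.T ^ l).reverse).prod

theorem abs_le_abs_add_of_mul_nonneg {R : Type*} [Ring R] [LinearOrder R] [IsStrictOrderedRing R]
    {a b : R} (h : 0 ≤ a * b) : |b| ≤ |a + b| := by
  have hsign : 0 ≤ a ∧ 0 ≤ b ∨ a ≤ 0 ∧ b ≤ 0 := mul_nonneg_iff.mp h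
  rw [(abs_add_eq_add_abs_iff a b).mpr hsign]
  exact le_add_of_nonneg_left (abs_nonneg a)

namespace ModularGroup

open Matrix.SpecialLinearGroup

theorem coe_S_mul_T_zpow (k : ℤ) : ↑(S * T ^ k) = !![0, -1; 1, k] := by
  rw [coe_mul, coe_S, coe_T_zpow]
  simp

end ModularGroup

theorem eichlerWord_cons (l : ℤ) (L : List ℤ) :
    eichlerWord (l :: L) = eichlerWord L * (S * T ^ l) := by
  simp [eichlerWord]

theorem eichlerWord_concat (L : List ℤ) (l : ℤ) :
    eichlerWord (L ++ [l]) = S * T ^ l * eichlerWord L := by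
  simp [eichlerWord]

def rowSum (γ : Matrix.SpecialLinearGroup (Fin 2) ℤ) (i : Fin 2) : ℤ :=
  γ i 0 + γ i 1

theorem rowSum_S_mul_T_zpow_mul_zero (k : ℤ) (γ : Matrix.SpecialLinearGroup (Fin 2) ℤ) :
    rowSum (S * T ^ k * γ) 0 = -rowSum γ 1 := by
  simp only [rowSum, Matrix.SpecialLinearGroup.coe_mul (S * T ^ k), coe_S_mul_T_zpow]
  simp [Matrix.mul_apply]
  ring

theorem rowSum_S_mul_T_zpow_mul_one (k : ℤ) (γ : Matrix.SpecialLinearGroup (Fin 2) ℤ) :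
    rowSum (S * T ^ k * γ) 1 = rowSum γ 0 + k * rowSum γ 1 := by
  simp only [rowSum, Matrix.SpecialLinearGroup.coe_mul (S * T ^ k), coe_S_mul_T_zpow]
  simp [Matrix.mul_apply]
  ring

theorem mul_S_apply_one_sub_apply_zero (γ : Matrix.SpecialLinearGroup (Fin 2) ℤ) (i : Fin 2) :
    (γ * S) i 1 - (γ * S) i 0 = -rowSum γ i := by
  simp [rowSum, Matrix.SpecialLinearGroup.coe_mul, coe_S, Matrix.mul_apply]
  ring

def AlternatesInSign (L : List ℤ) : Prop :=
  ∀ i < L.length, 0 < (-1 : ℤ) ^ i * L.getD i 0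

theorem AlternatesInSign.of_concat {L : List ℤ} {l : ℤ} (h : AlternatesInSign (L ++ [l])) :
    AlternatesInSign L ∧ 0 < (-1 : ℤ) ^ L.length * l := by
  refine ⟨fun i hi => ?_, ?_⟩
  · simpa only [List.getD_append _ _ _ _ hi] using h i (by simp; omega)
  · simpa [List.getD_append_right] using h L.length (by simp)

theorem AlternatesInSign.tail_of_canonical_signs {l : ℤ} {J : List ℤ}
    (hsign : ∀ j : ℕ, 1 ≤ j → j ≤ (l :: J).length - 2 →
      0 < (-1 : ℤ) ^ (j - 1) * (l :: J).getD j 0)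
    (hlast : 0 ≤ (-1 : ℤ) ^ ((l :: J).length - 2) * (l :: J).getD ((l :: J).length - 1) 0)
    (hlast' : (l :: J).getD ((l :: J).length - 1) 0 ≠ 0) :
    AlternatesInSign J := by
  intro i hi
  rcases Nat.lt_or_ge (i + 1) J.length with hinit | hfinal
  · simpa using hsign (i + 1) le_add_self (by simp; omega)
  · have hlen : J.length = i + 1 := by omega
    simp only [List.length_cons, hlen, Nat.add_sub_cancel, List.getD_cons_succ,
      show i + 1 + 1 - 2 = i by omega] at hlast hlast'
    exact hlast.lt_of_ne' (mul_ne_zero (pow_ne_zero _ (by norm_num)) hlast')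

theorem abs_prod_le_abs_rowSum_eichlerWord {L : List ℤ} (hL : AlternatesInSign L) :
    |L.prod| ≤ |rowSum (eichlerWord L) 1| ∧
      0 < (-1 : ℤ) ^ L.length * (rowSum (eichlerWord L) 0 * rowSum (eichlerWord L) 1) := by
  induction L using List.reverseRecOn with
  | nil => simp [eichlerWord, rowSum]
  | append_singleton L k ih =>
    obtain ⟨hL, hk⟩ := hL.of_concat
    obtain ⟨ih_prod, ih_sign⟩ := ih hL
    rw [eichlerWord_concat, rowSum_S_mul_T_zpow_mul_zero, rowSum_S_mul_T_zpow_mul_one,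
      List.prod_append, List.prod_singleton, List.length_append, List.length_singleton]
    set p := rowSum (eichlerWord L) 0
    set q := rowSum (eichlerWord L) 1
    have hq : q ≠ 0 := by rintro hq; simp [hq] at ih_sign
    have hsame : 0 < p * (k * q) := by
      have hsq : (-1 : ℤ) ^ L.length * (-1) ^ L.length = 1 := by rw [← mul_pow]; norm_num
      calc 0 < (-1) ^ L.length * k * ((-1) ^ L.length * (p * q)) := mul_pos hk ih_sign
        _ = p * (k * q) := by linear_combination (k * (p * q)) * hsq
    refine ⟨?_, ?_⟩
    · calc |L.prod * k| = |L.prod| * |k| := abs_mul _ _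
        _ ≤ |q| * |k| := by gcongr
        _ = |k * q| := by rw [abs_mul, mul_comm]
        _ ≤ |p + k * q| := abs_le_abs_add_of_mul_nonneg hsame.le
    · calc 0 < (-1) ^ L.length * (p * q) + (-1) ^ L.length * k * (q * q) :=
            add_pos ih_sign (mul_pos hk (mul_self_pos.mpr hq))
        _ = (-1) ^ (L.length + 1) * (-q * (p + k * q)) := by ring

theorem eichler_product_estimate_zero_general (γ : Matrix.SpecialLinearGroup (Fin 2) ℤ)
    (L : List ℤ)
    (hγ : γ = eichlerWord L)
    (hsign : ∀ j : ℕ, 1 ≤ j → j ≤ L.length - 2 → 0 < (-1 : ℤ) ^ (j - 1) * L.getD j 0)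
    (hlast : 0 ≤ (-1 : ℤ) ^ (L.length - 2) * L.getD (L.length - 1) 0)
    (hlast' : L.getD (L.length - 1) 0 ≠ 0)
    (h0 : L.getD 0 0 = 0) :
    |(L.drop 1).prod| ≤ |γ.1 1 1 - γ.1 1 0| := by
  obtain ⟨J, rfl⟩ : ∃ J, L = 0 :: J := by
    rcases L with _ | ⟨l, J⟩
    · simp at hlast'
    · exact ⟨J, by simpa using h0⟩
  have hJ : AlternatesInSign J := .tail_of_canonical_signs hsign hlast hlast'
  have hγS : γ = eichlerWord J * S := by rw [hγ, eichlerWord_cons, zpow_zero, mul_one]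
  rw [hγS, mul_S_apply_one_sub_apply_zero, abs_neg, List.drop_one, List.tail_cons]
  exact (abs_prod_le_abs_rowSum_eichlerWord hJ).1

/-- If `γ = [[a,b],[c,d]] ∈ SL(2,ℤ)` with `c > 0` has Eichler canonical
representation with `l_{ν+1} ≠ 0` and `l_0 = 0`, then
`|l_1 ⋯ l_{ν+1}| ≤ |d - c|`. -/
theorem eichler_product_estimate_zero (γ : Matrix.SpecialLinearGroup (Fin 2) ℤ)
    (hc : 0 < γ.1 1 0) (L : List ℤ)
    (hlen : 2 ≤ L.length) (hγ : γ = eichlerWord L)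
    (hsign : ∀ j : ℕ, 1 ≤ j → j ≤ L.length - 2 → 0 < (-1 : ℤ) ^ (j - 1) * L.getD j 0)
    (hlast : 0 ≤ (-1 : ℤ) ^ (L.length - 2) * L.getD (L.length - 1) 0)
    (hlast' : L.getD (L.length - 1) 0 ≠ 0)
    (h0 : L.getD 0 0 = 0) :
    |(L.drop 1).prod| ≤ |γ.1 1 1 - γ.1 1 0| :=
  eichler_product_estimate_zero_general γ L hγ hsign hlast hlast' h0
end

section
/- Define P_0 = S T^{l_0} with l_0 < 0 and P_{j+1} = (S T^{l_{j+1}}) P_j where the l_j (j ≥ 1) satisfy (-1)^{j-1} l_j > 0. Writing P_j = [[a_j,b_j],[c_j,d_j]], for all j ≥ 0 one has |l_0 l_1 ⋯ l_j| ≤ |d_j| and (-1)^j b_j d_j ≥ 0. -/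
/-!
Write `b_j, d_j` for the right-hand column of `P_j`. Left multiplication by `S T^l` sends a
column `(b, d)` to `(-d, b + l d)`, so `d_{j+1} = b_j + l_{j+1} d_j` and `b_{j+1} = -d_j`.
The sign condition on `l_{j+1}` makes `b_j` and `l_{j+1} d_j` agree in sign whenever
`(-1)^j b_j d_j ≥ 0`; then `|d_{j+1}| ≥ |l_{j+1}| |d_j|`, and
`(-1)^{j+1} b_{j+1} d_{j+1} = (-1)^j b_j d_j + (-1)^j l_{j+1} d_j^2 ≥ 0` propagates the sign.
-/

open ModularGroup

lemma abs_le_abs_add_of_nonneg_mul {α : Type*} [Ring α] [LinearOrder α] [IsStrictOrderedRing α]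
    {x y : α} (h : 0 ≤ x * y) : |y| ≤ |x + y| := by
  rcases mul_nonneg_iff.mp h with ⟨hx, hy⟩ | ⟨hx, hy⟩
  · rw [abs_of_nonneg hy, abs_of_nonneg (add_nonneg hx hy)]
    exact le_add_of_nonneg_left hx
  · rw [abs_of_nonpos hy, abs_of_nonpos (add_nonpos hx hy), neg_add]
    exact le_add_of_nonneg_left (neg_nonneg.mpr hx)

lemma ModularGroup.coe_S_mul_T_zpow_s13 (n : ℤ) : ↑(S * T ^ n) = !![0, -1; 1, n] := by
  simp [coe_T_zpow]

lemma ModularGroup.coe_S_mul_T_zpow_mul (n : ℤ) (M : Matrix.SpecialLinearGroup (Fin 2) ℤ) :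
    ↑(S * T ^ n * M) = !![-M 1 0, -M 1 1; M 0 0 + n * M 1 0, M 0 1 + n * M 1 1] := by
  rw [Matrix.SpecialLinearGroup.coe_mul, coe_S_mul_T_zpow_s13, Matrix.eta_fin_two (M : Matrix _ _ ℤ),
    Matrix.mul_fin_two]
  simp

namespace EichlerColumn

variable {l b d : ℕ → ℤ}

theorem neg_one_pow_mul_mul_nonneg (hbd0 : 0 ≤ b 0 * d 0)
    (hsign : ∀ j, 0 < (-1) ^ j * l (j + 1))
    (hb : ∀ j, b (j + 1) = -d j) (hd : ∀ j, d (j + 1) = b j + l (j + 1) * d j) (j : ℕ) :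
    0 ≤ (-1) ^ j * b j * d j := by
  induction j with
  | zero => simpa using hbd0
  | succ j ih =>
    have hstep : (-1) ^ (j + 1) * b (j + 1) * d (j + 1)
        = (-1) ^ j * b j * d j + (-1) ^ j * l (j + 1) * d j ^ 2 := by
      rw [hb, hd]; ring
    rw [hstep]
    have hl := hsign j
    positivity

theorem abs_prod_le_abs (hl0 : |l 0| ≤ |d 0|) (hbd0 : 0 ≤ b 0 * d 0)
    (hsign : ∀ j, 0 < (-1) ^ j * l (j + 1))
    (hb : ∀ j, b (j + 1) = -d j) (hd : ∀ j, d (j + 1) = b j + l (j + 1) * d j) (j : ℕ) :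
    |∏ t ∈ Finset.range (j + 1), l t| ≤ |d j| := by
  induction j with
  | zero => simpa using hl0
  | succ j ih =>
    have hsame : 0 ≤ b j * (l (j + 1) * d j) := by
      have hpow : ((-1 : ℤ) ^ j) ^ 2 = 1 := by rw [← pow_mul, mul_comm, pow_mul]; norm_num
      have hprod := mul_nonneg (neg_one_pow_mul_mul_nonneg hbd0 hsign hb hd j) (hsign j).le
      linear_combination hprod + (b j * d j * l (j + 1)) * hpow
    calc |∏ t ∈ Finset.range (j + 1 + 1), l t|
        = |∏ t ∈ Finset.range (j + 1), l t| * |l (j + 1)| := by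
          rw [Finset.prod_range_succ, abs_mul]
      _ ≤ |d j| * |l (j + 1)| := by gcongr
      _ = |l (j + 1) * d j| := by rw [abs_mul, mul_comm]
      _ ≤ |d (j + 1)| := hd j ▸ abs_le_abs_add_of_nonneg_mul hsame

end EichlerColumn

/-- Key induction: with `P_0 = S T^{l_0}`, `l_0 < 0`, and
`P_{j+1} = (S T^{l_{j+1}}) P_j` where `(-1)^{j-1} l_j > 0` for `j ≥ 1`, writing
`P_j = [[a_j,b_j],[c_j,d_j]]` one has `|l_0 l_1 ⋯ l_j| ≤ |d_j|` and
`(-1)^j b_j d_j ≥ 0` for all `j ≥ 0`. -/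
theorem eichler_partial_product_induction_neg (l : ℕ → ℤ)
    (h0 : l 0 < 0) (hsign : ∀ j : ℕ, 1 ≤ j → 0 < (-1 : ℤ) ^ (j - 1) * l j)
    (P : ℕ → Matrix.SpecialLinearGroup (Fin 2) ℤ)
    (hP0 : P 0 = ModularGroup.S * ModularGroup.T ^ (l 0))
    (hPstep : ∀ j : ℕ, P (j + 1) = (ModularGroup.S * ModularGroup.T ^ (l (j + 1))) * P j) :
    ∀ j : ℕ,
      |∏ t ∈ Finset.range (j + 1), l t| ≤ |(P j).1 1 1| ∧
      0 ≤ (-1 : ℤ) ^ j * ((P j).1 0 1) * ((P j).1 1 1) := by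
  have hb0 : (P 0).1 0 1 = -1 := by rw [hP0, coe_S_mul_T_zpow_s13]; rfl
  have hd0 : (P 0).1 1 1 = l 0 := by rw [hP0, coe_S_mul_T_zpow_s13]; rfl
  have hbd0 : 0 ≤ (P 0).1 0 1 * (P 0).1 1 1 := by rw [hb0, hd0]; omega
  have hsign' : ∀ j, 0 < (-1 : ℤ) ^ j * l (j + 1) := fun j => by
    simpa using hsign (j + 1) (by omega)
  have hb : ∀ j, (P (j + 1)).1 0 1 = -(P j).1 1 1 := fun j => by
    rw [hPstep, coe_S_mul_T_zpow_mul]; rfl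
  have hd : ∀ j, (P (j + 1)).1 1 1 = (P j).1 0 1 + l (j + 1) * (P j).1 1 1 := fun j => by
    rw [hPstep, coe_S_mul_T_zpow_mul]; rfl
  have hl0 : |l 0| ≤ |(P 0).1 1 1| := by rw [hd0]
  exact fun j =>
    ⟨EichlerColumn.abs_prod_le_abs (b := fun j => (P j).1 0 1) hl0 hbd0 hsign' hb hd j,
      EichlerColumn.neg_one_pow_mul_mul_nonneg (b := fun j => (P j).1 0 1)
        (d := fun j => (P j).1 1 1) hbd0 hsign' hb hd j⟩
end
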